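/- arXiv:1510.07534 — 2 statements merged into one kernel-verified Lean document; each statement's English description precedes it below -/
import Mathlib

section
/- Let G be a locally compact Hausdorff group with left Haar measure λ_G and modular function δ_G, let H ⊆ G be a closed subgroup with left Haar measure α and modular function δ_H, let λ⁻¹ denote the pushforward of λ_G under inversion, and let X be a topological space with a continuous right G-action. Then for every u ∈ X and every continuous compactly supported function f : X × H × X × G → ℂ, ∫_G ∫_H f(u·γ⁻¹η, η⁻¹, u·γ⁻¹, γ) dα(η) dλ⁻¹(γ) = ∫_G ∫_H f(u·γ⁻¹, η, u·γ⁻¹η, η⁻¹γ) · (δ_G(η)/δ_H(η)) dα(η) dλ⁻¹(γ). (This expresses that the family of right Haar measures on the transformation groupoid X ⋊ G is quasi-invariant for the left multiplication action of X ⋊ H, with adjoining function δ_G/δ_H.) -/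
/-!
Inverting `η` in the inner integral produces the factor `δ_H(η)⁻¹`, by the inversion formula
`∫ f(x⁻¹) dμ = ∫ f(x) δ(x)⁻¹ dμ`. After exchanging the integrals, the substitution `γ ↦ ηγ`
for the right-invariant measure `λ⁻¹` produces the factor `δ_G(η)`. The inversion formula itself
comes from computing `∫∫ f(x) g(yx) dμ(y) dμ(x)` in both orders.
-/

open MeasureTheory MulOpposite

theorem HasCompactSupport.comp_of_leftInverse {α β E : Type*} [TopologicalSpace α]
    [TopologicalSpace β] [Zero E] {f : β → E} {φ : α → β} {ψ : β → α}
    (hf : HasCompactSupport f) (hφ : Continuous φ) (hψ : Continuous ψ)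
    (hψφ : Function.LeftInverse ψ φ) : HasCompactSupport (f ∘ φ) :=
  (hf.image hψ).of_isClosed_subset (isClosed_tsupport _)
    ((tsupport_comp_subset_preimage f hφ).trans fun x hx => ⟨φ x, hx, hψφ x⟩)

theorem HasCompactSupport.mul_prod {α β R : Type*} [TopologicalSpace α] [TopologicalSpace β]
    [MulZeroClass R] {f : α → R} {g : β → R} (hf : HasCompactSupport f)
    (hg : HasCompactSupport g) : HasCompactSupport fun p : α × β => f p.1 * g p.2 :=
  (hf.prod hg).of_isClosed_subset (isClosed_tsupport _) <|
    closure_minimal (fun _ hp => ⟨subset_tsupport _ (left_ne_zero_of_mul hp),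
      subset_tsupport _ (right_ne_zero_of_mul hp)⟩)
      ((isClosed_tsupport f).prod (isClosed_tsupport g))

section ModularFunction

variable {G : Type*} [Group G] [TopologicalSpace G] [IsTopologicalGroup G]
  [MeasurableSpace G] [BorelSpace G]

theorem integral_measure_inv (μ : Measure G) (f : G → ℂ) :
    ∫ x, f x ∂μ.inv = ∫ x, f x⁻¹ ∂μ :=
  integral_map_equiv (MeasurableEquiv.inv G) f

variable [LocallyCompactSpace G]

theorem exists_integral_ne_zero (μ : Measure G) [μ.IsHaarMeasure] :
    ∃ f : G → ℂ, Continuous f ∧ HasCompactSupport f ∧ ∫ x, f x ∂μ ≠ 0 := by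
  obtain ⟨g, hgc, hg0, hg1⟩ := exists_continuous_nonneg_pos (1 : G)
  refine ⟨fun x => (g x : ℂ), by fun_prop, hgc.comp_left Complex.ofReal_zero, ?_⟩
  beta_reduce
  rw [integral_complex_ofReal, Complex.ofReal_ne_zero]
  exact (g.continuous.integral_pos_of_hasCompactSupport_nonneg_nonzero hgc hg0 hg1).ne'

/-- `δ` is the modular function of `μ`, normalised by `∫ f(xc) dμ(x) = δ(c)⁻¹ ∫ f dμ`; it is the
inverse of `MeasureTheory.Measure.modularCharacter`. -/
def IsModularFunction (μ : Measure G) (δ : G → ℝ) : Prop :=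
  ∀ f : G → ℂ, Continuous f → HasCompactSupport f → ∀ c : G,
    ∫ x, f (x * c) ∂μ = ((δ c : ℂ))⁻¹ * ∫ x, f x ∂μ

namespace IsModularFunction

variable {μ : Measure G} [μ.IsHaarMeasure] {δ : G → ℝ}

theorem ne_zero (hδ : IsModularFunction μ δ) (c : G) : δ c ≠ 0 := by
  obtain ⟨f, hf, hfs, hI⟩ := exists_integral_ne_zero μ
  intro hc
  have h := hδ (fun x => f (x * c⁻¹)) (by fun_prop)
    (hfs.comp_homeomorph (Homeomorph.mulRight c⁻¹)) c
  simp only [mul_inv_cancel_right, hc, Complex.ofReal_zero, inv_zero, zero_mul] at h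
  exact hI h

theorem continuous (hδ : IsModularFunction μ δ) : Continuous δ := by
  obtain ⟨f, hf, hfs, hI⟩ := exists_integral_ne_zero μ
  have hinv : Continuous fun c => ((δ c : ℂ))⁻¹ := by
    have hformula : (fun c => ((δ c : ℂ))⁻¹) =
        fun c => (∫ x, f (x⁻¹ * c) ∂μ.inv) / ∫ x, f x ∂μ := by
      ext c
      rw [integral_measure_inv, eq_div_iff hI, ← hδ f hf hfs c]
      simp only [inv_inv]
    rw [hformula]
    exact (continuous_integral_apply_inv_mul hf hfs).div_const _
  have hofReal : Continuous fun c => (δ c : ℂ) :=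
    (hinv.inv₀ fun c => inv_ne_zero (Complex.ofReal_ne_zero.2 (hδ.ne_zero c))).congr
      fun c => inv_inv _
  exact (Complex.continuous_re.comp hofReal).congr fun c => Complex.ofReal_re _

theorem integral_mul_left_measure_inv (hδ : IsModularFunction μ δ) {f : G → ℂ}
    (hf : Continuous f) (hfs : HasCompactSupport f) (c : G) :
    ∫ x, f (c * x) ∂μ.inv = δ c * ∫ x, f x ∂μ.inv := by
  rw [integral_measure_inv, integral_measure_inv]
  have h := hδ (fun x => f (c * x⁻¹)) (by fun_prop)
    (hfs.comp_homeomorph ((Homeomorph.inv G).trans (Homeomorph.mulLeft c))) c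
  simp only [mul_inv_rev, mul_inv_cancel_left] at h
  rw [h, ← mul_assoc, mul_inv_cancel₀ (Complex.ofReal_ne_zero.2 (hδ.ne_zero c)), one_mul]

theorem integral_comp_inv (hδ : IsModularFunction μ δ) {f : G → ℂ} (hf : Continuous f)
    (hfs : HasCompactSupport f) : ∫ x, f x⁻¹ ∂μ = ∫ x, f x * ((δ x : ℂ))⁻¹ ∂μ := by
  obtain ⟨g, hg, hgs, hI⟩ := exists_integral_ne_zero μ
  refine mul_right_cancel₀ hI ?_
  calc (∫ x, f x⁻¹ ∂μ) * ∫ x, g x ∂μ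
      = ∫ x, ∫ y, f (y⁻¹ * x) * g x ∂μ ∂μ := by
        rw [← integral_const_mul]
        congr 1 with x
        rw [integral_mul_const, ← integral_mul_left_eq_self (fun y => f (y⁻¹ * x)) x]
        simp
    _ = ∫ y, ∫ x, f (y⁻¹ * x) * g x ∂μ ∂μ := by
        apply integral_integral_swap_of_hasCompactSupport
        · fun_prop
        · exact (hfs.mul_prod hgs).comp_of_leftInverse (φ := fun p : G × G => (p.2⁻¹ * p.1, p.1))
            (ψ := fun p => (p.2, p.2 * p.1⁻¹)) (by fun_prop) (by fun_prop) fun p => by simp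
    _ = ∫ y, ∫ x, f x * g (y * x) ∂μ ∂μ := by
        congr 1 with y
        rw [← integral_mul_left_eq_self _ y]
        simp
    _ = ∫ x, ∫ y, f x * g (y * x) ∂μ ∂μ := by
        apply integral_integral_swap_of_hasCompactSupport
        · fun_prop
        · exact (hfs.mul_prod hgs).comp_of_leftInverse (φ := fun p : G × G => (p.2, p.1 * p.2))
            (ψ := fun p => (p.2 * p.1⁻¹, p.1)) (by fun_prop) (by fun_prop) fun p => by simp
    _ = (∫ x, f x * ((δ x : ℂ))⁻¹ ∂μ) * ∫ x, g x ∂μ := by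
        rw [← integral_mul_const]
        congr 1 with x
        rw [integral_const_mul, hδ g hg hgs x, mul_assoc]

theorem integral_integral_mul_left_measure_inv (hδ : IsModularFunction μ δ) {Y : Type*}
    [TopologicalSpace Y] [MeasurableSpace Y] [OpensMeasurableSpace Y] {ν : Measure Y}
    [IsFiniteMeasureOnCompacts ν] {φ : Y → G} (hφ : Continuous φ) {F : G × Y → ℂ}
    (hF : Continuous F) (hFs : HasCompactSupport F) :
    ∫ γ, ∫ y, F (φ y * γ, y) ∂ν ∂μ.inv = ∫ γ, ∫ y, δ (φ y) * F (γ, y) ∂ν ∂μ.inv := by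
  have hδ_cont := hδ.continuous
  calc ∫ γ, ∫ y, F (φ y * γ, y) ∂ν ∂μ.inv
      = ∫ y, ∫ γ, F (φ y * γ, y) ∂μ.inv ∂ν := by
        apply integral_integral_swap_of_hasCompactSupport
        · fun_prop
        · exact hFs.comp_of_leftInverse (φ := fun p : G × Y => (φ p.2 * p.1, p.2))
            (ψ := fun p => ((φ p.2)⁻¹ * p.1, p.2)) (by fun_prop) (by fun_prop) fun p => by simp
    _ = ∫ y, ∫ γ, δ (φ y) * F (γ, y) ∂μ.inv ∂ν := by
        congr 1 with y
        rw [integral_const_mul]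
        exact hδ.integral_mul_left_measure_inv (f := fun γ => F (γ, y)) (by fun_prop)
          (hFs.comp_of_leftInverse (φ := fun γ => (γ, y)) (by fun_prop) continuous_fst
            fun _ => rfl) (φ y)
    _ = ∫ γ, ∫ y, δ (φ y) * F (γ, y) ∂ν ∂μ.inv := by
        apply integral_integral_swap_of_hasCompactSupport
        · fun_prop
        · exact (hFs.comp_homeomorph (Homeomorph.prodComm Y G)).mul_left

theorem integral_integral_inv_eq_integral_integral_mul_div (hδ : IsModularFunction μ δ)
    {H : Type*} [Group H] [TopologicalSpace H] [IsTopologicalGroup H] [LocallyCompactSpace H]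
    [MeasurableSpace H] [BorelSpace H] {α : Measure H} [α.IsHaarMeasure] {δH : H → ℝ}
    (hδH : IsModularFunction α δH) (φ : H →* G) (hφ : Continuous φ) {F : G × H → ℂ}
    (hF : Continuous F) (hFs : HasCompactSupport F) :
    ∫ γ, ∫ η, F ((φ η)⁻¹ * γ, η⁻¹) ∂α ∂μ.inv
      = ∫ γ, ∫ η, F (γ, η) * ((δ (φ η) / δH η : ℝ) : ℂ) ∂α ∂μ.inv := by
  have hδH_inv : Continuous fun η => ((δH η : ℂ))⁻¹ :=
    (Complex.continuous_ofReal.comp hδH.continuous).inv₀ fun η =>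
      Complex.ofReal_ne_zero.2 (hδH.ne_zero η)
  calc ∫ γ, ∫ η, F ((φ η)⁻¹ * γ, η⁻¹) ∂α ∂μ.inv
      = ∫ γ, ∫ η, F (φ η * γ, η) * ((δH η : ℂ))⁻¹ ∂α ∂μ.inv := by
        congr 1 with γ
        simpa only [map_inv] using hδH.integral_comp_inv (f := fun η => F (φ η * γ, η))
          (by fun_prop) (hFs.comp_of_leftInverse (φ := fun η => (φ η * γ, η)) (by fun_prop)
            continuous_snd fun _ => rfl)
    _ = ∫ γ, ∫ η, δ (φ η) * (F (γ, η) * ((δH η : ℂ))⁻¹) ∂α ∂μ.inv :=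
        hδ.integral_integral_mul_left_measure_inv (F := fun p => F p * ((δH p.2 : ℂ))⁻¹) hφ
          (hF.mul (hδH_inv.comp continuous_snd)) hFs.mul_right
    _ = ∫ γ, ∫ η, F (γ, η) * ((δ (φ η) / δH η : ℝ) : ℂ) ∂α ∂μ.inv := by
        congr 1 with γ
        congr 1 with η
        push_cast
        ring

end IsModularFunction

end ModularFunction

theorem transformation_groupoid_quasi_invariance_general
    {G X : Type*}
    [Group G] [TopologicalSpace G] [IsTopologicalGroup G]
    [LocallyCompactSpace G] [MeasurableSpace G] [BorelSpace G]
    [TopologicalSpace X]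
    [MulAction Gᵐᵒᵖ X] [ContinuousSMul Gᵐᵒᵖ X]
    (lamG : Measure G) [lamG.IsHaarMeasure]
    (δG : G → ℝ)
    (hδG : ∀ f : G → ℂ, Continuous f → HasCompactSupport f → ∀ c : G,
      ∫ γ, f (γ * c) ∂lamG = ((δG c : ℂ))⁻¹ * ∫ γ, f γ ∂lamG)
    (H : Subgroup G) (hH : IsClosed (H : Set G))
    (α : Measure H) [α.IsHaarMeasure]
    (δH : H → ℝ)
    (hδH : ∀ f : H → ℂ, Continuous f → HasCompactSupport f → ∀ c : H,
      ∫ η, f (η * c) ∂α = ((δH c : ℂ))⁻¹ * ∫ η, f η ∂α) :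
    ∀ u : X, ∀ f : X × H × X × G → ℂ, Continuous f → HasCompactSupport f →
      ∫ γ, (∫ η : H, f (op (γ⁻¹ * (η : G)) • u, η⁻¹, op γ⁻¹ • u, γ) ∂α)
          ∂(Measure.map (fun γ : G => γ⁻¹) lamG)
      = ∫ γ, (∫ η : H, f (op γ⁻¹ • u, η, op (γ⁻¹ * (η : G)) • u, (η : G)⁻¹ * γ)
              * ((δG (η : G) / δH η : ℝ) : ℂ) ∂α)
          ∂(Measure.map (fun γ : G => γ⁻¹) lamG) := by
  intro u f hf hfs
  have : LocallyCompactSpace H := hH.locallyCompactSpace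
  have key := IsModularFunction.integral_integral_inv_eq_integral_integral_mul_div hδG hδH
    H.subtype continuous_subtype_val
    (F := fun p => f (op p.1⁻¹ • u, p.2, op (p.1⁻¹ * p.2) • u, (p.2 : G)⁻¹ * p.1))
    (by fun_prop)
    (hfs.comp_of_leftInverse (ψ := fun p => ((p.2.1 : G) * p.2.2.2, p.2.1)) (by fun_prop)
      (by fun_prop) fun p => by simp)
  simp only [Subgroup.subtype_apply, InvMemClass.coe_inv, mul_inv_rev, inv_inv,
    mul_inv_cancel_right, mul_inv_cancel_left] at key
  exact key

/-- for a locally compact Hausdorff group `G` (left Haar measure `λ_G`,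
modular function `δ_G`), a closed subgroup `H ≤ G` (left Haar measure `α`, modular
function `δ_H`), and a continuous right `G`-action on a space `X`, the family of right
Haar measures on the transformation groupoid `X ⋊ G` is quasi-invariant for left
multiplication by `X ⋊ H`, with adjoining function `δ_G/δ_H`:
`∫∫ f(u·γ⁻¹η, η⁻¹, u·γ⁻¹, γ) dα dλ⁻¹ = ∫∫ f(u·γ⁻¹, η, u·γ⁻¹η, η⁻¹γ) δ_G(η)/δ_H(η) dα dλ⁻¹`. -/
theorem transformation_groupoid_quasi_invariance
    {G X : Type*}
    [Group G] [TopologicalSpace G] [IsTopologicalGroup G]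
    [LocallyCompactSpace G] [T2Space G] [MeasurableSpace G] [BorelSpace G]
    [TopologicalSpace X]
    [MulAction Gᵐᵒᵖ X] [ContinuousSMul Gᵐᵒᵖ X]
    (lamG : Measure G) [lamG.IsHaarMeasure]
    (δG : G → ℝ) (hδGpos : ∀ γ, 0 < δG γ)
    (hδG : ∀ f : G → ℂ, Continuous f → HasCompactSupport f → ∀ c : G,
      ∫ γ, f (γ * c) ∂lamG = ((δG c : ℂ))⁻¹ * ∫ γ, f γ ∂lamG)
    (H : Subgroup G) (hH : IsClosed (H : Set G))
    (α : Measure H) [α.IsHaarMeasure]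
    (δH : H → ℝ) (hδHpos : ∀ η, 0 < δH η)
    (hδH : ∀ f : H → ℂ, Continuous f → HasCompactSupport f → ∀ c : H,
      ∫ η, f (η * c) ∂α = ((δH c : ℂ))⁻¹ * ∫ η, f η ∂α) :
    ∀ u : X, ∀ f : X × H × X × G → ℂ, Continuous f → HasCompactSupport f →
      ∫ γ, (∫ η : H, f (op (γ⁻¹ * (η : G)) • u, η⁻¹, op γ⁻¹ • u, γ) ∂α)
          ∂(Measure.map (fun γ : G => γ⁻¹) lamG)
      = ∫ γ, (∫ η : H, f (op γ⁻¹ • u, η, op (γ⁻¹ * (η : G)) • u, (η : G)⁻¹ * γ)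
              * ((δG (η : G) / δH η : ℝ) : ℂ) ∂α)
          ∂(Measure.map (fun γ : G => γ⁻¹) lamG) :=
  transformation_groupoid_quasi_invariance_general lamG δG hδG H hH α δH hδH
end

section
/- Let H be a locally compact Hausdorff group with left Haar measure β and modular function δ_H, acting continuously and properly on the right on a locally compact Hausdorff space X; let λ be a positive Radon measure on X and M : X → ℝ_{>0} a continuous function satisfying M(x·η) = δ_H(η)·M(x) for all x ∈ X, η ∈ H. Let ℋ be a complex Hilbert space and π a unitary representation of H on ℋ (a group homomorphism into the unitary operators such that h ↦ π(h)ξ is continuous for each ξ ∈ ℋ). For f ∈ C_c(X) define ⟨f, f⟩(η) = ∫_X conj(f(x)) f(x·η) dλ(x), the section (|f⟩⟩ξ)(x) = ∫_H f(x·η) M(x·η)^{1/2} π(η)ξ dβ(η), and the operator L(u)ξ = ∫_H u(η) δ_H(η)^{1/2} π(η)ξ dβ(η) for u ∈ C_c(H). Then for every f ∈ C_c(X) and ξ ∈ ℋ, ∫_X conj(f(x)) M(x)^{-1/2} (|f⟩⟩ξ)(x) dλ(x) = L(⟨f, f⟩)ξ; that is, ⟨⟨f| ∘ |f⟩⟩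 = L(⟨f, f⟩). -/
open MeasureTheory MulOpposite

/-!
Exchange the two integrals (Fubini for a continuous, compactly supported integrand: compact
support in `(x, η)` is exactly what properness of the action provides). The inner `x`-integral
then carries the weight `M(x)^{-1/2} M(x·η)^{1/2}`, which the covariance `M(x·η) = δ_H(η) M(x)`
turns into the constant `δ_H(η)^{1/2}`, leaving `⟨f, f⟩(η) δ_H(η)^{1/2} π(η)ξ` under the
`η`-integral.
-/

theorem HasCompactSupport.comp_isProperMap {Y Z R : Type*} [TopologicalSpace Y]
    [TopologicalSpace Z] [Zero R] {g : Z → R} {φ : Y → Z} (hg : HasCompactSupport g)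
    (hφ : IsProperMap φ) : HasCompactSupport (g ∘ φ) :=
  .intro' (hφ.isCompact_preimage hg) (isClosed_tsupport g |>.preimage hφ.continuous)
    fun _ hy => image_eq_zero_of_notMem_tsupport (f := g) hy

theorem HasCompactSupport.mul_prod_s18 {X Y R : Type*} [TopologicalSpace X] [TopologicalSpace Y]
    [MulZeroClass R] {a : X → R} {b : Y → R} (ha : HasCompactSupport a)
    (hb : HasCompactSupport b) : HasCompactSupport fun p : X × Y => a p.1 * b p.2 := by
  refine .intro' (ha.prod hb) ((isClosed_tsupport a).prod (isClosed_tsupport b)) fun p hp => ?_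
  rcases not_and_or.mp hp with h | h <;> simp [image_eq_zero_of_notMem_tsupport h]

section ProperAction

variable {H X 𝕜 E : Type*} [Monoid H] [TopologicalSpace H] [MeasurableSpace H]
  [OpensMeasurableSpace H] [TopologicalSpace X] [MulAction Hᵐᵒᵖ X] [ContinuousSMul Hᵐᵒᵖ X]
  [MeasurableSpace X] [OpensMeasurableSpace X]
  [RCLike 𝕜] [NormedAddCommGroup E] [NormedSpace 𝕜 E] [NormedSpace ℝ E] [CompleteSpace E]
  [SMulCommClass ℝ 𝕜 E]

theorem integral_integral_swap_of_isProperMap_action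
    (hproper : IsProperMap fun p : X × H => (p.1, op p.2 • p.1))
    (μ : Measure X) [IsFiniteMeasureOnCompacts μ] (ν : Measure H) [IsFiniteMeasureOnCompacts ν]
    {a b : X → 𝕜} (ha : Continuous a) (hac : HasCompactSupport a) (hb : Continuous b)
    (hbc : HasCompactSupport b) {v : H → E} (hv : Continuous v) :
    ∫ x, a x • ∫ η, b (op η • x) • v η ∂ν ∂μ = ∫ η, (∫ x, a x * b (op η • x) ∂μ) • v η ∂ν := by
  have hact : Continuous fun p : X × H => op p.2 • p.1 :=
    (continuous_op.comp continuous_snd).smul continuous_fst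
  have hscalar : HasCompactSupport fun p : X × H => a p.1 * b (op p.2 • p.1) :=
    (hac.mul_prod_s18 hbc |>.comp_isProperMap hproper :)
  calc ∫ x, a x • ∫ η, b (op η • x) • v η ∂ν ∂μ
      = ∫ x, ∫ η, (a x * b (op η • x)) • v η ∂ν ∂μ := by
        congr 1 with x
        rw [← integral_smul]
        simp only [smul_smul]
    _ = ∫ η, ∫ x, (a x * b (op η • x)) • v η ∂μ ∂ν :=
        integral_integral_swap_of_hasCompactSupport (f := fun x η => (a x * b (op η • x)) • v η)
          (((ha.comp continuous_fst).mul (hb.comp hact)).smul (hv.comp continuous_snd))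
          hscalar.smul_right
    _ = ∫ η, (∫ x, a x * b (op η • x) ∂μ) • v η ∂ν := by
        simp only [integral_smul_const]

end ProperAction

theorem Complex.ofReal_sqrt_inv_mul_ofReal_sqrt_mul {a : ℝ} (ha : 0 < a) (d : ℝ) :
    ((√a : ℝ) : ℂ)⁻¹ * ((√(d * a) : ℝ) : ℂ) = ((√d : ℝ) : ℂ) := by
  have hsqrt : ((√a : ℝ) : ℂ) ≠ 0 := by exact_mod_cast (Real.sqrt_pos.mpr ha).ne'
  rw [Real.sqrt_mul' d ha.le, Complex.ofReal_mul]
  field_simp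

theorem bra_ket_equals_convolution_operator_general
    {H X : Type*}
    [Group H] [TopologicalSpace H]
    [MeasurableSpace H] [BorelSpace H]
    [TopologicalSpace X]
    [MulAction Hᵐᵒᵖ X] [ContinuousSMul Hᵐᵒᵖ X]
    [MeasurableSpace X] [BorelSpace X]
    (β : Measure H) [β.IsHaarMeasure]
    (δH : H → ℝ)
    (hproper : IsProperMap (fun p : X × H => (p.1, op p.2 • p.1)))
    (lam : Measure X) [lam.Regular]
    (M : X → ℝ) (hMpos : ∀ x, 0 < M x) (hMcont : Continuous M)
    (hMmod : ∀ (x : X) (η : H), M (op η • x) = δH η * M x)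
    {E : Type*} [NormedAddCommGroup E] [InnerProductSpace ℂ E] [CompleteSpace E]
    (π : H →* (E ≃ₗᵢ[ℂ] E)) (hπcont : ∀ ξ : E, Continuous fun h : H => π h ξ)
    (f : X → ℂ) (hf : Continuous f) (hfc : HasCompactSupport f) (ξ : E) :
    ∫ x, ((starRingEnd ℂ) (f x) * ((Real.sqrt (M x) : ℂ))⁻¹)
        • (∫ η, (f (op η • x) * (Real.sqrt (M (op η • x)) : ℂ)) • (π η ξ) ∂β) ∂lam
    = ∫ η, ((∫ x, (starRingEnd ℂ) (f x) * f (op η • x) ∂lam)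
        * (Real.sqrt (δH η) : ℂ)) • (π η ξ) ∂β := by
  have hsqrtM : Continuous fun x => ((√(M x) : ℝ) : ℂ) :=
    Complex.continuous_ofReal.comp (Real.continuous_sqrt.comp hMcont)
  have hsqrtM_ne : ∀ x, ((√(M x) : ℝ) : ℂ) ≠ 0 := fun x => by
    exact_mod_cast (Real.sqrt_pos.mpr (hMpos x)).ne'
  have hweight : ∀ x η, (starRingEnd ℂ (f x) * ((√(M x) : ℝ) : ℂ)⁻¹) *
      (f (op η • x) * ((√(M (op η • x)) : ℝ) : ℂ))
      = starRingEnd ℂ (f x) * f (op η • x) * ((√(δH η) : ℝ) : ℂ) := fun x η => by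
    rw [← Complex.ofReal_sqrt_inv_mul_ofReal_sqrt_mul (hMpos x) (δH η), ← hMmod]
    ring
  refine (integral_integral_swap_of_isProperMap_action hproper lam β
    (a := fun x => starRingEnd ℂ (f x) * ((√(M x) : ℝ) : ℂ)⁻¹)
    (b := fun y => f y * ((√(M y) : ℝ) : ℂ))
    ((Complex.continuous_conj.comp hf).mul (hsqrtM.inv₀ hsqrtM_ne))
    (hfc.comp_left (map_zero _)).mul_right (hf.mul hsqrtM) hfc.mul_right (hπcont ξ)).trans ?_
  simp only [hweight, integral_mul_const]

/-- with `H` (left Haar `β`, modular function `δ_H`) acting continuously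
and properly on the right on `X`, `λ` a Radon measure on `X`, `M > 0` continuous with
`M(x·η) = δ_H(η) M(x)`, and a unitary representation `π` of `H` on a Hilbert space `E`,
one has `⟨⟨f| ∘ |f⟩⟩ ξ = L(⟨f,f⟩) ξ` for every `f ∈ C_c(X)` and `ξ ∈ E`, where
`⟨f,f⟩(η) = ∫ conj(f(x)) f(x·η) dλ`, `(|f⟩⟩ξ)(x) = ∫ f(x·η) M(x·η)^{1/2} π(η)ξ dβ`,
`⟨⟨f|ζ = ∫ conj(f(x)) M(x)^{-1/2} ζ(x) dλ` and `L(u)ξ = ∫ u(η) δ_H(η)^{1/2} π(η)ξ dβ`. -/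
theorem bra_ket_equals_convolution_operator
    {H X : Type*}
    [Group H] [TopologicalSpace H] [IsTopologicalGroup H]
    [LocallyCompactSpace H] [T2Space H] [MeasurableSpace H] [BorelSpace H]
    [TopologicalSpace X] [LocallyCompactSpace X] [T2Space X]
    [MulAction Hᵐᵒᵖ X] [ContinuousSMul Hᵐᵒᵖ X]
    [MeasurableSpace X] [BorelSpace X]
    (β : Measure H) [β.IsHaarMeasure]
    (δH : H → ℝ) (hδHpos : ∀ η, 0 < δH η)
    (hδH : ∀ g : H → ℂ, Continuous g → HasCompactSupport g → ∀ c : H,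
      ∫ η, g (η * c) ∂β = ((δH c : ℂ))⁻¹ * ∫ η, g η ∂β)
    (hproper : IsProperMap (fun p : X × H => (p.1, op p.2 • p.1)))
    (lam : Measure X) [lam.Regular]
    (M : X → ℝ) (hMpos : ∀ x, 0 < M x) (hMcont : Continuous M)
    (hMmod : ∀ (x : X) (η : H), M (op η • x) = δH η * M x)
    {E : Type*} [NormedAddCommGroup E] [InnerProductSpace ℂ E] [CompleteSpace E]
    (π : H →* (E ≃ₗᵢ[ℂ] E)) (hπcont : ∀ ξ : E, Continuous fun h : H => π h ξ)
    (f : X → ℂ) (hf : Continuous f) (hfc : HasCompactSupport f) (ξ : E) :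
    ∫ x, ((starRingEnd ℂ) (f x) * ((Real.sqrt (M x) : ℂ))⁻¹)
        • (∫ η, (f (op η • x) * (Real.sqrt (M (op η • x)) : ℂ)) • (π η ξ) ∂β) ∂lam
    = ∫ η, ((∫ x, (starRingEnd ℂ) (f x) * f (op η • x) ∂lam)
        * (Real.sqrt (δH η) : ℂ)) • (π η ξ) ∂β :=
  bra_ket_equals_convolution_operator_general β δH hproper lam M hMpos hMcont hMmod π hπcont f hf
    hfc ξ
end
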